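/- Let n ≥ 1, d ≥ 1. There exists a constant c₅ > 0 depending only on n and d such that: for every normalized polynomial P of degree d in ℂⁿ with H = {z : P(z) = 0}, every v ∈ ℂⁿ with ‖v‖ ≤ 1 and dist(v, H) ≤ 1, and every complex affine line L = {v + t·w : t ∈ ℂ} through v (w a unit vector), one has |P(v)| ≥ c₅·‖P_L‖·dist(v, H)^d. -/

import Mathlib

noncomputable section

def unitCube (n : ℕ) : Set (EuclideanSpace ℂ (Fin n)) :=
  {z | ∀ i, (z i).re ∈ Set.Icc (0:ℝ) 1 ∧ (z i).im ∈ Set.Icc (0:ℝ) 1}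

def mvNorm {n : ℕ} (P : MvPolynomial (Fin n) ℂ) : ℝ :=
  ∑ α ∈ P.support, ‖P.coeff α‖

def zeroSet {n : ℕ} (P : MvPolynomial (Fin n) ℂ) : Set (EuclideanSpace ℂ (Fin n)) :=
  {z | MvPolynomial.eval (fun i => z i) P = 0}

def Qr (n : ℕ) (H : Set (EuclideanSpace ℂ (Fin n))) (r : ℝ) : Set (EuclideanSpace ℂ (Fin n)) :=
  unitCube n \ {z | Metric.infDist z H ≤ r}

def polyNorm (p : Polynomial ℂ) : ℝ := ∑ k ∈ p.support, ‖p.coeff k‖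

def lineRestrict {n : ℕ} (P : MvPolynomial (Fin n) ℂ) (b w : EuclideanSpace ℂ (Fin n)) :
    Polynomial ℂ :=
  MvPolynomial.aeval (fun i => Polynomial.C (b i) + Polynomial.C (w i) * Polynomial.X) P

def lineSet {n : ℕ} (b w : EuclideanSpace ℂ (Fin n)) : Set (EuclideanSpace ℂ (Fin n)) :=
  {z | ∃ t : ℂ, z = b + t • w}

/-!
On the line, `P` becomes `q(t) = P(v + t w)`, of degree at most `d`; factor it as
`q = c ∏ (t - aⱼ)`. Each root gives the point `v + aⱼ w` of `H`, at distance `|aⱼ|` from `v`, so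
`|aⱼ| ≥ r := dist(v, H)`. Now `|P(v)| = |q(0)| = |c| ∏ |aⱼ|` while `‖q‖ ≤ |c| ∏ (1 + |aⱼ|)` by
submultiplicativity of the coefficient norm, and `|aⱼ| ≥ (r/2)(1 + |aⱼ|)` because `r ≤ 1`.
Hence `|P(v)| ≥ (r/2)^d ‖q‖`.
-/

open Polynomial

lemma polyNorm_zero : polyNorm 0 = 0 := by simp [polyNorm]

lemma polyNorm_eq_sum_of_support_subset {p : ℂ[X]} {s : Finset ℕ} (h : p.support ⊆ s) :
    polyNorm p = ∑ k ∈ s, ‖p.coeff k‖ :=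
  Finset.sum_subset h fun k _ hk => by simp [notMem_support_iff.mp hk]

lemma polyNorm_nonneg (p : ℂ[X]) : 0 ≤ polyNorm p :=
  Finset.sum_nonneg fun _ _ => norm_nonneg _

lemma polyNorm_add_le (p q : ℂ[X]) : polyNorm (p + q) ≤ polyNorm p + polyNorm q := by
  classical
  rw [polyNorm_eq_sum_of_support_subset (support_add (p := p) (q := q)),
    polyNorm_eq_sum_of_support_subset (Finset.subset_union_left (s₂ := q.support)),
    polyNorm_eq_sum_of_support_subset (Finset.subset_union_right (s₁ := p.support)),
    ← Finset.sum_add_distrib]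
  exact Finset.sum_le_sum fun k _ => by simpa using norm_add_le (p.coeff k) (q.coeff k)

lemma polyNorm_sum_le {ι : Type*} (s : Finset ι) (f : ι → ℂ[X]) :
    polyNorm (∑ i ∈ s, f i) ≤ ∑ i ∈ s, polyNorm (f i) :=
  Finset.le_sum_of_subadditive polyNorm polyNorm_zero.le polyNorm_add_le s f

lemma polyNorm_monomial (n : ℕ) (a : ℂ) : polyNorm (monomial n a) = ‖a‖ := by
  rw [polyNorm_eq_sum_of_support_subset (s := {n}) (support_monomial_subset n a)]
  simp

lemma polyNorm_mul_le (p q : ℂ[X]) : polyNorm (p * q) ≤ polyNorm p * polyNorm q := by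
  rw [mul_eq_sum_sum]
  refine (polyNorm_sum_le _ _).trans ?_
  rw [polyNorm, polyNorm, Finset.sum_mul_sum]
  refine Finset.sum_le_sum fun i _ => (polyNorm_sum_le _ _).trans_eq ?_
  simp only [polyNorm_monomial, norm_mul]

lemma polyNorm_C (a : ℂ) : polyNorm (C a) = ‖a‖ := by
  rw [← monomial_zero_left, polyNorm_monomial]

lemma polyNorm_X_sub_C_le (a : ℂ) : polyNorm (X - C a) ≤ 1 + ‖a‖ := by
  have h := polyNorm_add_le (monomial 1 1) (C (-a))
  rwa [polyNorm_monomial, polyNorm_C, norm_one, norm_neg, C_neg, ← sub_eq_add_neg, ← X] at h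

lemma polyNorm_multiset_prod_le (s : Multiset ℂ[X]) :
    polyNorm s.prod ≤ (s.map polyNorm).prod := by
  induction s using Multiset.induction with
  | empty => simpa using (polyNorm_C 1).le
  | cons p s ih =>
    rw [Multiset.prod_cons, Multiset.map_cons, Multiset.prod_cons]
    exact (polyNorm_mul_le p _).trans (by gcongr; exact polyNorm_nonneg p)

lemma polyNorm_le_norm_leadingCoeff_mul_prod_roots (q : ℂ[X]) :
    polyNorm q ≤ ‖q.leadingCoeff‖ * (q.roots.map fun a => 1 + ‖a‖).prod := by
  conv_lhs => rw [(IsAlgClosed.splits q).eq_prod_roots]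
  refine (polyNorm_mul_le _ _).trans ?_
  rw [polyNorm_C]
  gcongr
  refine (polyNorm_multiset_prod_le _).trans ?_
  rw [Multiset.map_map]
  exact Multiset.prod_map_le_prod_map₀ _ _ (fun _ _ => polyNorm_nonneg _)
    fun a _ => polyNorm_X_sub_C_le a

lemma norm_eval_zero_eq_norm_leadingCoeff_mul_prod_roots (q : ℂ[X]) :
    ‖q.eval 0‖ = ‖q.leadingCoeff‖ * (q.roots.map (‖·‖)).prod := by
  rw [(IsAlgClosed.splits q).eval_eq_prod_roots, norm_mul]
  simp only [zero_sub, Multiset.prod_map_neg, norm_mul, norm_pow, norm_neg, norm_one, one_pow,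
    one_mul]
  exact congrArg _ (map_multiset_prod (normHom : ℂ →*₀ ℝ) q.roots)

lemma pow_mul_polyNorm_le_norm_eval_zero {q : ℂ[X]} {r : ℝ} (hr0 : 0 ≤ r) (hr1 : r ≤ 1)
    (hroots : ∀ a ∈ q.roots, r ≤ ‖a‖) :
    (r / 2) ^ q.natDegree * polyNorm q ≤ ‖q.eval 0‖ := by
  have hroot_bound : ∀ a ∈ q.roots, r / 2 * (1 + ‖a‖) ≤ ‖a‖ := fun a ha => by
    nlinarith [hroots a ha, norm_nonneg a]
  calc (r / 2) ^ q.natDegree * polyNorm q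
      ≤ (r / 2) ^ q.natDegree * (‖q.leadingCoeff‖ * (q.roots.map fun a => 1 + ‖a‖).prod) := by
        gcongr; exact polyNorm_le_norm_leadingCoeff_mul_prod_roots q
    _ = ‖q.leadingCoeff‖ * (q.roots.map fun a => r / 2 * (1 + ‖a‖)).prod := by
        rw [(IsAlgClosed.splits q).natDegree_eq_card_roots, Multiset.prod_map_mul,
          Multiset.map_const', Multiset.prod_replicate]
        ring
    _ ≤ ‖q.leadingCoeff‖ * (q.roots.map (‖·‖)).prod := by
        gcongr
        exact Multiset.prod_map_le_prod_map₀ _ _ (fun _ _ => by positivity) hroot_bound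
    _ = ‖q.eval 0‖ := (norm_eval_zero_eq_norm_leadingCoeff_mul_prod_roots q).symm

lemma natDegree_aeval_le_totalDegree {σ R : Type*} [CommSemiring R] (P : MvPolynomial σ R)
    (g : σ → R[X]) (hg : ∀ i, (g i).natDegree ≤ 1) :
    (MvPolynomial.aeval g P).natDegree ≤ P.totalDegree := by
  rw [MvPolynomial.aeval_def, MvPolynomial.eval₂_eq]
  refine natDegree_sum_le_of_forall_le _ _ fun α hα => ?_
  refine (natDegree_C_mul_le _ _).trans <| (natDegree_prod_le _ _).trans ?_
  calc ∑ i ∈ α.support, (g i ^ α i).natDegree ≤ ∑ i ∈ α.support, α i :=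
        Finset.sum_le_sum fun i _ => natDegree_pow_le_of_le _ (hg i) |>.trans_eq (mul_one _)
    _ ≤ P.totalDegree := MvPolynomial.le_totalDegree hα

section Line

variable {n : ℕ} (P : MvPolynomial (Fin n) ℂ) (v w : EuclideanSpace ℂ (Fin n))

lemma natDegree_lineRestrict_le : (lineRestrict P v w).natDegree ≤ P.totalDegree :=
  natDegree_aeval_le_totalDegree P _ fun _ => (natDegree_add_le _ _).trans (by
    simpa using natDegree_C_mul_le _ X |>.trans natDegree_X_le)

lemma eval_lineRestrict (t : ℂ) :
    (lineRestrict P v w).eval t = MvPolynomial.eval (fun i => (v + t • w) i) P := by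
  rw [lineRestrict, ← coe_aeval_eq_eval, MvPolynomial.comp_aeval_apply,
    MvPolynomial.aeval_eq_eval]
  congr 2 with i
  simp [mul_comm (w i)]

lemma infDist_zeroSet_le_norm_of_isRoot (hw : ‖w‖ = 1) {a : ℂ}
    (ha : (lineRestrict P v w).IsRoot a) : Metric.infDist v (zeroSet P) ≤ ‖a‖ := by
  have hmem : v + a • w ∈ zeroSet P := by
    rw [IsRoot, eval_lineRestrict] at ha
    exact ha
  calc Metric.infDist v (zeroSet P) ≤ dist v (v + a • w) := Metric.infDist_le_dist_of_mem hmem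
    _ = ‖a‖ := by rw [dist_self_add_right, norm_smul, hw, mul_one]

end Line

theorem stmt13_general (n d : ℕ) :
    ∃ c₅ : ℝ, 0 < c₅ ∧
      ∀ P : MvPolynomial (Fin n) ℂ, P.totalDegree = d → mvNorm P = 1 →
        ∀ v : EuclideanSpace ℂ (Fin n), ‖v‖ ≤ 1 →
          Metric.infDist v (zeroSet P) ≤ 1 →
          ∀ w : EuclideanSpace ℂ (Fin n), ‖w‖ = 1 →
            c₅ * polyNorm (lineRestrict P v w) * Metric.infDist v (zeroSet P) ^ d ≤
              ‖MvPolynomial.eval (fun i => v i) P‖ := by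
  refine ⟨(1 / 2) ^ d, by positivity, fun P hdeg _ v _ hdist w hw => ?_⟩
  set q := lineRestrict P v w
  set r := Metric.infDist v (zeroSet P)
  have hr0 : 0 ≤ r := Metric.infDist_nonneg
  have hq : (r / 2) ^ q.natDegree * polyNorm q ≤ ‖q.eval 0‖ :=
    pow_mul_polyNorm_le_norm_eval_zero hr0 hdist fun a ha =>
      infDist_zeroSet_le_norm_of_isRoot P v w hw (isRoot_of_mem_roots ha)
  calc (1 / 2) ^ d * polyNorm q * r ^ d = (r / 2) ^ d * polyNorm q := by ring
    _ ≤ (r / 2) ^ q.natDegree * polyNorm q :=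
        mul_le_mul_of_nonneg_right (pow_le_pow_of_le_one (by positivity) (by linarith)
          (hdeg ▸ natDegree_lineRestrict_le P v w)) (polyNorm_nonneg q)
    _ ≤ ‖q.eval 0‖ := hq
    _ = ‖MvPolynomial.eval (fun i => v i) P‖ := by simp [q, eval_lineRestrict]

theorem stmt13 (n d : ℕ) (hn : 1 ≤ n) (hd : 1 ≤ d) :
    ∃ c₅ : ℝ, 0 < c₅ ∧
      ∀ P : MvPolynomial (Fin n) ℂ, P.totalDegree = d → mvNorm P = 1 →
        ∀ v : EuclideanSpace ℂ (Fin n), ‖v‖ ≤ 1 →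
          Metric.infDist v (zeroSet P) ≤ 1 →
          ∀ w : EuclideanSpace ℂ (Fin n), ‖w‖ = 1 →
            c₅ * polyNorm (lineRestrict P v w) * Metric.infDist v (zeroSet P) ^ d ≤
              ‖MvPolynomial.eval (fun i => v i) P‖ :=
  stmt13_general n d
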